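/- Let p be a prime and k a field of characteristic p with [k : k^p] = ∞, and let A be the subring of k⟦t⟧ consisting of those power series Σ_{n≥0} aₙtⁿ with [k^p(a₀,a₁,…) : k^p] < ∞. Then A ≠ k⟦t⟧, and for any element c ∈ k⟦t⟧ \ A, the integral closure of A in the finite field extension L := K(c) of K is not a finitely generated A-module. In particular, A is not a Japanese ring. -/

import Mathlib

set_option synthInstance.maxHeartbeats 1000000
set_option maxHeartbeats 2000000

variable (k : Type*) [Field k] (p : ℕ) [Fact p.Prime] [CharP k p]

/-- The subfield `k^p` of `p`-th powers of the field `k` (of characteristic `p`). -/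
noncomputable def pthPowerSubfield : Subfield k := (frobenius k p).fieldRange

variable {k p}

lemma isIntegral_pthPowerSubfield (a : k) : IsIntegral ↥(pthPowerSubfield k p) a := by
  refine ⟨Polynomial.X ^ p - Polynomial.C ⟨a ^ p, a, rfl⟩,
    Polynomial.monic_X_pow_sub_C _ (Fact.out : p.Prime).ne_zero, ?_⟩
  simp only [Polynomial.eval₂_sub, Polynomial.eval₂_pow, Polynomial.eval₂_X, Polynomial.eval₂_C]
  exact sub_eq_zero.mpr rfl

variable (k p) in
/-- The field `k^p(a₀, a₁, …)` generated over `k^p` by the coefficients of a power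
series `f` is a finite extension of `k^p`. -/
def HasFiniteCoeffField (f : PowerSeries k) : Prop :=
  FiniteDimensional ↥(pthPowerSubfield k p)
    ↥(IntermediateField.adjoin ↥(pthPowerSubfield k p)
      (Set.range fun n => PowerSeries.coeff n f))

lemma hasFiniteCoeffField_of_mem {f : PowerSeries k}
    (E : IntermediateField ↥(pthPowerSubfield k p) k) (hE : FiniteDimensional ↥(pthPowerSubfield k p) E)
    (h : ∀ n, PowerSeries.coeff n f ∈ E) : HasFiniteCoeffField k p f := by
  have hle : IntermediateField.adjoin ↥(pthPowerSubfield k p)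
      (Set.range fun n => PowerSeries.coeff n f) ≤ E := by
    rw [IntermediateField.adjoin_le_iff]
    rintro x ⟨n, rfl⟩; exact h n
  exact FiniteDimensional.of_injective
    (IntermediateField.inclusion hle).toLinearMap
    (IntermediateField.inclusion_injective hle)

variable (k p) in
/-- The subring `A ⊆ k⟦t⟧` of power series whose coefficients generate a finite
extension of `k^p`. -/
noncomputable def finiteCoeffSubring : Subring (PowerSeries k) where
  carrier := {f | HasFiniteCoeffField k p f}
  zero_mem' := hasFiniteCoeffField_of_mem ⊥ inferInstance (fun n => by
    rw [map_zero]; exact zero_mem ⊥)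
  one_mem' := hasFiniteCoeffField_of_mem ⊥ inferInstance (fun n => by
    rw [PowerSeries.coeff_one]
    split
    · exact one_mem ⊥
    · exact zero_mem ⊥)
  add_mem' := by
    intro f g hf hg
    haveI : FiniteDimensional ↥(pthPowerSubfield k p)
        ↥(IntermediateField.adjoin ↥(pthPowerSubfield k p)
          (Set.range fun n => PowerSeries.coeff n f)) := hf
    haveI : FiniteDimensional ↥(pthPowerSubfield k p)
        ↥(IntermediateField.adjoin ↥(pthPowerSubfield k p)
          (Set.range fun n => PowerSeries.coeff n g)) := hg
    refine hasFiniteCoeffField_of_mem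
      (IntermediateField.adjoin _ (Set.range fun n => PowerSeries.coeff n f) ⊔
        IntermediateField.adjoin _ (Set.range fun n => PowerSeries.coeff n g))
      inferInstance fun n => ?_
    rw [map_add]
    exact add_mem
      (le_sup_left (α := IntermediateField _ k) (IntermediateField.subset_adjoin _ _ ⟨n, rfl⟩))
      (le_sup_right (α := IntermediateField _ k) (IntermediateField.subset_adjoin _ _ ⟨n, rfl⟩))
  mul_mem' := by
    intro f g hf hg
    haveI : FiniteDimensional ↥(pthPowerSubfield k p)
        ↥(IntermediateField.adjoin ↥(pthPowerSubfield k p)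
          (Set.range fun n => PowerSeries.coeff n f)) := hf
    haveI : FiniteDimensional ↥(pthPowerSubfield k p)
        ↥(IntermediateField.adjoin ↥(pthPowerSubfield k p)
          (Set.range fun n => PowerSeries.coeff n g)) := hg
    refine hasFiniteCoeffField_of_mem
      (IntermediateField.adjoin _ (Set.range fun n => PowerSeries.coeff n f) ⊔
        IntermediateField.adjoin _ (Set.range fun n => PowerSeries.coeff n g))
      inferInstance fun n => ?_
    rw [PowerSeries.coeff_mul]
    refine sum_mem fun c _ => mul_mem
      (le_sup_left (α := IntermediateField _ k) (IntermediateField.subset_adjoin _ _ ⟨c.1, rfl⟩))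
      (le_sup_right (α := IntermediateField _ k) (IntermediateField.subset_adjoin _ _ ⟨c.2, rfl⟩))
  neg_mem' := by
    intro f hf
    haveI : FiniteDimensional ↥(pthPowerSubfield k p)
        ↥(IntermediateField.adjoin ↥(pthPowerSubfield k p)
          (Set.range fun n => PowerSeries.coeff n f)) := hf
    refine hasFiniteCoeffField_of_mem
      (IntermediateField.adjoin _ (Set.range fun n => PowerSeries.coeff n f))
      inferInstance fun n => ?_
    rw [map_neg]
    exact neg_mem (IntermediateField.subset_adjoin _ _ ⟨n, rfl⟩)

variable (k p) in
/-- The subfield `L = K(c)` of `k((t))` generated by the subring `A = finiteCoeffSubring`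
(hence by its fraction field `K`) together with the element `c ∈ k⟦t⟧`. -/
noncomputable def adjoinElemSubfield (c : PowerSeries k) : Subfield (LaurentSeries k) :=
  Subfield.closure
    ((HahnSeries.ofPowerSeries ℤ k) '' (finiteCoeffSubring k p : Set (PowerSeries k)) ∪
      {HahnSeries.ofPowerSeries ℤ k c})

variable (k p) in
/-- The canonical inclusion `A → L = K(c)`. -/
noncomputable def toAdjoinElemSubfield (c : PowerSeries k) :
    ↥(finiteCoeffSubring k p) →+* ↥(adjoinElemSubfield k p c) :=
  RingHom.codRestrict
    ((HahnSeries.ofPowerSeries ℤ k).comp (finiteCoeffSubring k p).subtype)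
    (adjoinElemSubfield k p c)
    (fun a => Subfield.subset_closure (Or.inl ⟨a, a.2, rfl⟩))

/-!
Frobenius maps `k⟦t⟧` into `A`, and every nonzero element of `A` is `t ^ n` times a unit of
`A`. Hence `K = A[1/t]` and `L ⊆ A[c][1/t]`, where `A[c]` is free over `A` on
`1, c, …, c ^ (p - 1)` since `c ∉ K` and `c ^ p ∈ K`. Splitting `c = c_m + t ^ m d_m` with `c_m`
a polynomial, each `d_m ∈ L ∩ k⟦t⟧` is integral over `A` because `d_m ^ p ∈ A`. A finitely
generated `A`-submodule of `L` has a common denominator `t ^ N` over `A[c]`, but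
`t ^ N d_(N+1) ∈ A[c]` would give `c` the coordinate `t ^ N ∈ t ^ (N + 1) A`.

For `A ≠ k⟦t⟧`, take a power series whose coefficients are linearly independent over `k^p`.
-/

open PowerSeries (X coeff mk constantCoeff divXPowOrder trunc)

theorem linearIndependent_pow_of_pow_char_mem {E : Type*} [Field E] (p : ℕ) [Fact p.Prime]
    [CharP E p] (F : Subfield E) {γ : E} (hγ : γ ∉ F) (hγp : γ ^ p ∈ F) :
    LinearIndependent F fun i : Fin p => γ ^ (i : ℕ) := by
  have hp : p.Prime := Fact.out
  have hroot : ∀ b : F, b ^ p ≠ ⟨γ ^ p, hγp⟩ := fun b hb =>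
    hγ (frobenius_inj E p (congrArg Subtype.val hb) ▸ b.2)
  have hminpoly : minpoly F γ = Polynomial.X ^ p - Polynomial.C ⟨γ ^ p, hγp⟩ :=
    (minpoly.eq_of_irreducible_of_monic (X_pow_sub_C_irreducible_of_prime hp hroot)
      (by rw [map_sub, Polynomial.aeval_X_pow, Polynomial.aeval_C]; exact sub_self _)
      (Polynomial.monic_X_pow_sub_C _ hp.ne_zero)).symm
  have := linearIndependent_pow (K := F) γ
  rwa [hminpoly, Polynomial.natDegree_X_pow_sub_C] at this

theorem IntermediateField.finite_of_linearIndependent {K L ι : Type*} [Field K] [Field L]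
    [Algebra K L] (E : IntermediateField K L) [FiniteDimensional K E] {v : ι → L}
    (hv : LinearIndependent K v) (hvE : ∀ i, v i ∈ E) : Finite ι :=
  (LinearIndependent.of_comp E.val.toLinearMap (v := fun i => (⟨v i, hvE i⟩ : E)) hv).finite

theorem Submodule.FG.exists_le_of_monotone {R M : Type*} [Semiring R] [AddCommMonoid M]
    [Module R M] {P : Submodule R M} (hP : P.FG) {F : ℕ → Submodule R M} (hF : Monotone F)
    (hcover : ∀ x ∈ P, ∃ n, x ∈ F n) : ∃ n, P ≤ F n := by
  have hle : P ≤ sSup (Set.range F) := fun x hx =>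
    let ⟨n, hn⟩ := hcover x hx
    (le_sSup (Set.mem_range_self n) : F n ≤ _) hn
  obtain ⟨_, ⟨n, rfl⟩, hn⟩ := (Submodule.fg_iff_compact P).mp hP _ _ (Set.range_nonempty F)
    hF.directed_le.directedOn_range (isLUB_sSup _) hle
  exact ⟨n, hn⟩

variable (p) in
noncomputable def coeffField (f : PowerSeries k) : IntermediateField (pthPowerSubfield k p) k :=
  IntermediateField.adjoin (pthPowerSubfield k p) (Set.range fun n => coeff n f)

theorem coeff_mem_coeffField (f : PowerSeries k) (n : ℕ) : coeff n f ∈ coeffField p f :=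
  IntermediateField.subset_adjoin _ _ ⟨n, rfl⟩

theorem mem_finiteCoeffSubring_iff {f : PowerSeries k} :
    f ∈ finiteCoeffSubring k p ↔ FiniteDimensional (pthPowerSubfield k p) (coeffField p f) :=
  Iff.rfl

theorem mem_finiteCoeffSubring_of_coeff_mem {f : PowerSeries k}
    (E : IntermediateField (pthPowerSubfield k p) k) [FiniteDimensional (pthPowerSubfield k p) E]
    (h : ∀ n, coeff n f ∈ E) : f ∈ finiteCoeffSubring k p :=
  hasFiniteCoeffField_of_mem E inferInstance h

theorem mem_finiteCoeffSubring_of_coeff_mem_coeffField {f g : PowerSeries k}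
    (hf : f ∈ finiteCoeffSubring k p) (h : ∀ n, coeff n g ∈ coeffField p f) :
    g ∈ finiteCoeffSubring k p :=
  have := mem_finiteCoeffSubring_iff.mp hf
  mem_finiteCoeffSubring_of_coeff_mem (coeffField p f) h

theorem coe_polynomial_mem_finiteCoeffSubring (P : Polynomial k) :
    (P : PowerSeries k) ∈ finiteCoeffSubring k p := by
  have := IntermediateField.finiteDimensional_adjoin (K := pthPowerSubfield k p)
    (S := (P.coeffs : Set k)) fun x _ => isIntegral_pthPowerSubfield x
  refine mem_finiteCoeffSubring_of_coeff_mem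
    (IntermediateField.adjoin (pthPowerSubfield k p) P.coeffs) fun n => ?_
  rw [Polynomial.coeff_coe]
  by_cases hn : P.coeff n = 0
  · exact hn ▸ zero_mem _
  · exact IntermediateField.subset_adjoin _ _ (Polynomial.coeff_mem_coeffs hn)

theorem X_mem_finiteCoeffSubring : (X : PowerSeries k) ∈ finiteCoeffSubring k p := by
  simpa using coe_polynomial_mem_finiteCoeffSubring (p := p) Polynomial.X

theorem coeff_pow_char_mem_pthPowerSubfield (f : PowerSeries k) (n : ℕ) :
    coeff n (f ^ p) ∈ pthPowerSubfield k p := by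
  rw [← PowerSeries.coeff_coe_trunc_of_lt (Nat.lt_succ_self n), ← PowerSeries.trunc_trunc_pow,
    PowerSeries.coeff_coe_trunc_of_lt (Nat.lt_succ_self n), ← Polynomial.coe_pow,
    Polynomial.coeff_coe, ← Polynomial.map_frobenius_expand, Polynomial.coeff_map]
  exact ⟨_, rfl⟩

theorem pow_char_mem_finiteCoeffSubring (f : PowerSeries k) : f ^ p ∈ finiteCoeffSubring k p :=
  mem_finiteCoeffSubring_of_coeff_mem ⊥ fun n =>
    IntermediateField.mem_bot.mpr ⟨⟨_, coeff_pow_char_mem_pthPowerSubfield f n⟩, rfl⟩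

theorem mem_finiteCoeffSubring_of_mul_X_pow_mem {f : PowerSeries k} {n : ℕ}
    (hf : f * X ^ n ∈ finiteCoeffSubring k p) : f ∈ finiteCoeffSubring k p :=
  mem_finiteCoeffSubring_of_coeff_mem_coeffField hf fun i => by
    rw [← PowerSeries.coeff_mul_X_pow f n i]; exact coeff_mem_coeffField _ _

theorem divXPowOrder_mem_finiteCoeffSubring {f : PowerSeries k}
    (hf : f ∈ finiteCoeffSubring k p) : divXPowOrder f ∈ finiteCoeffSubring k p :=
  mem_finiteCoeffSubring_of_coeff_mem_coeffField hf fun n => by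
    rw [PowerSeries.coeff_divXPowOrder]; exact coeff_mem_coeffField _ _

theorem inv_mem_finiteCoeffSubring {f : PowerSeries k} (hf : f ∈ finiteCoeffSubring k p) :
    f⁻¹ ∈ finiteCoeffSubring k p := by
  have := mem_finiteCoeffSubring_iff.mp hf
  set E := coeffField p f
  by_cases h0 : constantCoeff f = 0
  · rw [PowerSeries.inv_eq_zero.mpr h0]; exact zero_mem _
  let F : PowerSeries E := mk fun n => ⟨coeff n f, coeff_mem_coeffField f n⟩
  have hF : PowerSeries.map (algebraMap E k) F = f := by ext n; simp [F]
  have hF0 : constantCoeff F ≠ 0 := fun h => h0 (by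
    rw [← hF, ← PowerSeries.coeff_zero_eq_constantCoeff_apply, PowerSeries.coeff_map,
      PowerSeries.coeff_zero_eq_constantCoeff_apply, h, map_zero])
  have hinv : f⁻¹ = PowerSeries.map (algebraMap E k) F⁻¹ := by
    rw [PowerSeries.inv_eq_iff_mul_eq_one h0, ← hF, ← map_mul, PowerSeries.inv_mul_cancel F hF0,
      map_one]
  rw [hinv]
  exact mem_finiteCoeffSubring_of_coeff_mem E fun n => by
    rw [PowerSeries.coeff_map]; exact (coeff n F⁻¹).2

theorem exists_pow_char_mul_eq_X_pow {f : PowerSeries k} (hf : f ≠ 0) :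
    ∃ e : ℕ, ∃ g ∈ finiteCoeffSubring k p, f ^ p * g = X ^ e := by
  set u := divXPowOrder (f ^ p)
  have hu0 : constantCoeff u ≠ 0 :=
    PowerSeries.constantCoeff_divXPowOrder_eq_zero_iff.not.mpr (pow_ne_zero p hf)
  refine ⟨(f ^ p).order.toNat, u⁻¹, inv_mem_finiteCoeffSubring
    (divXPowOrder_mem_finiteCoeffSubring (pow_char_mem_finiteCoeffSubring f)), ?_⟩
  conv_lhs => rw [← PowerSeries.X_pow_order_mul_divXPowOrder (f := f ^ p)]
  rw [mul_assoc, PowerSeries.mul_inv_cancel u hu0, mul_one]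

theorem exists_notMem_finiteCoeffSubring (hinf : ¬ FiniteDimensional (pthPowerSubfield k p) k) :
    ∃ f : PowerSeries k, f ∉ finiteCoeffSubring k p := by
  let b := Module.Basis.ofVectorSpace (pthPowerSubfield k p) k
  have : Infinite (Module.Basis.ofVectorSpaceIndex (pthPowerSubfield k p) k) :=
    not_finite_iff_infinite.mp fun _ => hinf (Module.Finite.of_basis b)
  let e := Infinite.natEmbedding (Module.Basis.ofVectorSpaceIndex (pthPowerSubfield k p) k)
  refine ⟨mk (b ∘ e), fun hf => ?_⟩
  have := mem_finiteCoeffSubring_iff.mp hf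
  have : Finite ℕ := (coeffField p _).finite_of_linearIndependent
    (b.linearIndependent.comp e e.injective) fun n => by
      simpa using coeff_mem_coeffField (p := p) (mk (b ∘ e)) n
  exact not_finite ℕ

theorem finiteCoeffSubring_ne_top (hinf : ¬ FiniteDimensional (pthPowerSubfield k p) k) :
    finiteCoeffSubring k p ≠ ⊤ := fun htop =>
  let ⟨f, hf⟩ := exists_notMem_finiteCoeffSubring hinf
  hf (htop ▸ Subring.mem_top f)

noncomputable def locSubfield (S : Subring (PowerSeries k)) (hS : finiteCoeffSubring k p ≤ S) :
    Subfield (LaurentSeries k) where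
  carrier := {x | ∃ n : ℕ, ∃ b ∈ S, x * ((X ^ n : PowerSeries k) : LaurentSeries k) = b}
  zero_mem' := ⟨0, 0, zero_mem S, by simp⟩
  one_mem' := ⟨0, 1, one_mem S, by simp⟩
  add_mem' := by
    rintro x y ⟨n, a, ha, hx⟩ ⟨m, b, hb, hy⟩
    have hX : ∀ i, X ^ i ∈ S := fun i => hS (pow_mem X_mem_finiteCoeffSubring i)
    refine ⟨n + m, a * X ^ m + b * X ^ n, add_mem (mul_mem ha (hX m)) (mul_mem hb (hX n)), ?_⟩
    simp only [map_add, map_mul, map_pow] at hx hy ⊢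
    linear_combination (HahnSeries.ofPowerSeries ℤ k X) ^ m * hx +
      (HahnSeries.ofPowerSeries ℤ k X) ^ n * hy
  neg_mem' := by
    rintro x ⟨n, a, ha, hx⟩
    exact ⟨n, -a, neg_mem ha, by rw [map_neg, ← hx, neg_mul]⟩
  mul_mem' := by
    rintro x y ⟨n, a, ha, hx⟩ ⟨m, b, hb, hy⟩
    refine ⟨n + m, a * b, mul_mem ha hb, ?_⟩
    rw [pow_add, map_mul, map_mul, ← hx, ← hy]
    ring
  inv_mem' := by
    rintro x ⟨n, b, hb, hx⟩
    by_cases hx0 : x = 0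
    · exact ⟨0, 0, zero_mem S, by simp [hx0]⟩
    have hb0 : b ≠ 0 := by
      rintro rfl
      simp [hx0] at hx
    -- `b⁻¹ = b ^ (p - 1) / b ^ p`, and `b ^ p ∈ A` is a power of `X` times a unit of `A`.
    obtain ⟨e, g, hg, hbg⟩ := exists_pow_char_mul_eq_X_pow (p := p) hb0
    refine ⟨e, X ^ n * b ^ (p - 1) * g,
      mul_mem (mul_mem (hS (pow_mem X_mem_finiteCoeffSubring n)) (pow_mem hb _)) (hS hg), ?_⟩
    rw [inv_mul_eq_iff_eq_mul₀ hx0, ← hbg, ← pow_sub_one_mul (Fact.out : p.Prime).ne_zero]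
    simp only [map_mul, ← hx]
    ring

theorem coe_mem_locSubfield {S : Subring (PowerSeries k)} (hS : finiteCoeffSubring k p ≤ S)
    {f : PowerSeries k} (hf : f ∈ S) : (f : LaurentSeries k) ∈ locSubfield S hS :=
  ⟨0, f, hf, by simp⟩

theorem mem_finiteCoeffSubring_of_coe_mem_locSubfield {f : PowerSeries k}
    (hf : (f : LaurentSeries k) ∈ locSubfield (finiteCoeffSubring k p) le_rfl) :
    f ∈ finiteCoeffSubring k p := by
  obtain ⟨n, a, ha, hfa⟩ := hf
  rw [← map_mul] at hfa
  exact mem_finiteCoeffSubring_of_mul_X_pow_mem (HahnSeries.ofPowerSeries_injective hfa ▸ ha)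

variable (p) in
noncomputable def powSpan (c : PowerSeries k) :
    Submodule (finiteCoeffSubring k p) (PowerSeries k) :=
  Submodule.span (finiteCoeffSubring k p) (Set.range fun j : Fin p => c ^ (j : ℕ))

theorem pow_mem_powSpan (c : PowerSeries k) {j : ℕ} (hj : j < p) : c ^ j ∈ powSpan p c :=
  Submodule.subset_span ⟨⟨j, hj⟩, rfl⟩

theorem mem_powSpan_of_mem_finiteCoeffSubring (c : PowerSeries k) {a : PowerSeries k}
    (ha : a ∈ finiteCoeffSubring k p) : a ∈ powSpan p c := by
  simpa [Subring.smul_def] using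
    (powSpan p c).smul_mem ⟨a, ha⟩ (pow_mem_powSpan c (Fact.out : p.Prime).pos)

theorem powSpan_mul_le (c : PowerSeries k) : powSpan p c * powSpan p c ≤ powSpan p c := by
  rw [powSpan, Submodule.span_mul_span, Submodule.span_le]
  rintro _ ⟨_, ⟨i, rfl⟩, _, ⟨j, rfl⟩, rfl⟩
  change c ^ (i : ℕ) * c ^ (j : ℕ) ∈ powSpan p c
  rw [← pow_add]
  by_cases hij : (i : ℕ) + j < p
  · exact pow_mem_powSpan c hij
  · -- `c ^ p ∈ A` is a scalar
    rw [show (i : ℕ) + j = p + (i + j - p) by omega, pow_add]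
    exact (powSpan p c).smul_mem ⟨c ^ p, pow_char_mem_finiteCoeffSubring c⟩
      (pow_mem_powSpan c (by omega))

variable (p) in
noncomputable def adjoinSubring (c : PowerSeries k) : Subring (PowerSeries k) :=
  ((powSpan p c).toSubalgebra (by simpa using pow_mem_powSpan c (Fact.out : p.Prime).pos)
    fun _ _ hx hy => powSpan_mul_le c (Submodule.mul_mem_mul hx hy)).toSubring

theorem mem_adjoinSubring {c x : PowerSeries k} : x ∈ adjoinSubring p c ↔ x ∈ powSpan p c :=
  Iff.rfl

theorem finiteCoeffSubring_le_adjoinSubring (c : PowerSeries k) :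
    finiteCoeffSubring k p ≤ adjoinSubring p c :=
  fun _ ha => mem_powSpan_of_mem_finiteCoeffSubring c ha

theorem linearIndependent_pow_of_notMem {c : PowerSeries k} (hc : c ∉ finiteCoeffSubring k p) :
    LinearIndependent (finiteCoeffSubring k p) fun j : Fin p => c ^ (j : ℕ) := by
  have : CharP (LaurentSeries k) p := charP_of_injective_algebraMap (algebraMap k _).injective p
  set K := locSubfield (finiteCoeffSubring k p) le_rfl
  have hcK : (c : LaurentSeries k) ∉ K := fun h =>
    hc (mem_finiteCoeffSubring_of_coe_mem_locSubfield h)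
  have hcpK : (c : LaurentSeries k) ^ p ∈ K := by
    rw [← map_pow]; exact coe_mem_locSubfield le_rfl (pow_char_mem_finiteCoeffSubring c)
  rw [Fintype.linearIndependent_iff]
  intro g hg j
  have := Fintype.linearIndependent_iff.mp (linearIndependent_pow_of_pow_char_mem p K hcK hcpK)
    (fun i => ⟨g i, coe_mem_locSubfield le_rfl (g i).2⟩) (by
      simpa [Subfield.smul_def, Subring.smul_def] using
        congrArg (HahnSeries.ofPowerSeries ℤ k) hg) j
  have hgj : HahnSeries.ofPowerSeries ℤ k (g j) = 0 := congrArg Subtype.val this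
  exact Subtype.ext ((map_eq_zero_iff _ HahnSeries.ofPowerSeries_injective).mp hgj)

theorem X_pow_mul_ne_add_X_pow_succ_mul {c : PowerSeries k} (hc : c ∉ finiteCoeffSubring k p)
    (N : ℕ) {a b : PowerSeries k} (ha : a ∈ finiteCoeffSubring k p) (hb : b ∈ powSpan p c) :
    X ^ N * c ≠ a + X ^ (N + 1) * b := by
  intro h
  have hp : p.Prime := Fact.out
  obtain ⟨κ, rfl⟩ := (Submodule.mem_span_range_iff_exists_fun _).mp hb
  let t : ℕ → finiteCoeffSubring k p := fun n => ⟨X ^ n, pow_mem X_mem_finiteCoeffSubring n⟩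
  -- compare the coordinates of both sides at `c ^ 1` in the basis `1, c, …, c ^ (p - 1)`
  have hcoord := Fintype.linearIndependent_iffₛ.mp (linearIndependent_pow_of_notMem hc)
    (Pi.single ⟨1, hp.one_lt⟩ (t N)) (Pi.single ⟨0, hp.pos⟩ ⟨a, ha⟩ + t (N + 1) • κ)
    (by simp [t, Pi.single_apply, add_smul, Finset.sum_add_distrib, Subring.smul_def,
      Finset.mul_sum, mul_assoc, h]) ⟨1, hp.one_lt⟩
  have hX : X ^ N = X ^ (N + 1) * (κ ⟨1, hp.one_lt⟩ : PowerSeries k) := by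
    simpa [t] using congrArg Subtype.val hcoord
  simpa [PowerSeries.coeff_X_pow_mul'] using congrArg (coeff N) hX

noncomputable instance (c : PowerSeries k) :
    Algebra (finiteCoeffSubring k p) (adjoinElemSubfield k p c) :=
  (toAdjoinElemSubfield k p c).toAlgebra

theorem coe_mem_adjoinElemSubfield_of_mem {c f : PowerSeries k}
    (hf : f ∈ finiteCoeffSubring k p) : (f : LaurentSeries k) ∈ adjoinElemSubfield k p c :=
  Subfield.subset_closure (Or.inl ⟨f, hf, rfl⟩)

theorem coe_mem_adjoinElemSubfield (c : PowerSeries k) :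
    (c : LaurentSeries k) ∈ adjoinElemSubfield k p c :=
  Subfield.subset_closure (Or.inr rfl)

theorem adjoinElemSubfield_le_locSubfield (c : PowerSeries k) :
    adjoinElemSubfield k p c ≤
      locSubfield (adjoinSubring p c) (finiteCoeffSubring_le_adjoinSubring c) := by
  rw [adjoinElemSubfield, Subfield.closure_le]
  rintro _ (⟨a, ha, rfl⟩ | rfl)
  · exact coe_mem_locSubfield _ (finiteCoeffSubring_le_adjoinSubring c ha)
  · exact coe_mem_locSubfield _ (mem_adjoinSubring.mpr
      (by simpa using pow_mem_powSpan (p := p) c (Fact.out : p.Prime).one_lt))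

theorem coe_shift_mem_adjoinElemSubfield (c : PowerSeries k) (m : ℕ) :
    ((mk fun i => coeff (i + m) c : PowerSeries k) : LaurentSeries k) ∈
      adjoinElemSubfield k p c := by
  have hX : ((X ^ m : PowerSeries k) : LaurentSeries k) ≠ 0 :=
    (map_ne_zero_iff _ HahnSeries.ofPowerSeries_injective).mpr (pow_ne_zero m PowerSeries.X_ne_zero)
  have hd : ((mk fun i => coeff (i + m) c : PowerSeries k) : LaurentSeries k) =
      ((c : LaurentSeries k) - (trunc m c : PowerSeries k)) *
        ((X ^ m : PowerSeries k) : LaurentSeries k)⁻¹ := by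
    rw [eq_mul_inv_iff_mul_eq₀ hX, eq_sub_iff_add_eq, mul_comm, ← map_mul, ← map_add,
      ← PowerSeries.eq_X_pow_mul_shift_add_trunc]
  rw [hd]
  exact mul_mem (sub_mem (coe_mem_adjoinElemSubfield c)
    (coe_mem_adjoinElemSubfield_of_mem (coe_polynomial_mem_finiteCoeffSubring _)))
    (inv_mem (coe_mem_adjoinElemSubfield_of_mem (pow_mem X_mem_finiteCoeffSubring m)))

theorem isIntegral_of_val_eq_coe {c d : PowerSeries k} (y : adjoinElemSubfield k p c)
    (hy : (y : LaurentSeries k) = d) : IsIntegral (finiteCoeffSubring k p) y := by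
  refine ⟨Polynomial.X ^ p - Polynomial.C ⟨d ^ p, pow_char_mem_finiteCoeffSubring d⟩,
    Polynomial.monic_X_pow_sub_C _ (Fact.out : p.Prime).ne_zero, ?_⟩
  rw [Polynomial.eval₂_sub, Polynomial.eval₂_X_pow, Polynomial.eval₂_C, sub_eq_zero]
  exact Subtype.ext (by rw [SubmonoidClass.coe_pow, hy, ← map_pow]; rfl)

variable (p) in
noncomputable def denomSubmodule (c : PowerSeries k) (N : ℕ) :
    Submodule (finiteCoeffSubring k p) (adjoinElemSubfield k p c) where
  carrier :=
    {x | ∃ b ∈ powSpan p c, (x : LaurentSeries k) * ((X ^ N : PowerSeries k) : LaurentSeries k) = b}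
  zero_mem' := ⟨0, zero_mem _, by simp⟩
  add_mem' := by
    rintro x y ⟨a, ha, hx⟩ ⟨b, hb, hy⟩
    exact ⟨a + b, add_mem ha hb, by rw [Subfield.coe_add, add_mul, hx, hy, map_add]⟩
  smul_mem' := by
    rintro a x ⟨b, hb, hx⟩
    refine ⟨a • b, (powSpan p c).smul_mem a hb, ?_⟩
    change (a : LaurentSeries k) * x * _ = _
    rw [mul_assoc, hx, Subring.smul_def, smul_eq_mul, map_mul]

theorem denomSubmodule_mono (c : PowerSeries k) : Monotone (denomSubmodule p c) := by
  rintro N M hNM x ⟨b, hb, hx⟩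
  refine ⟨X ^ (M - N) * b,
    (powSpan p c).smul_mem ⟨_, pow_mem X_mem_finiteCoeffSubring _⟩ hb, ?_⟩
  rw [← Nat.add_sub_cancel' hNM, pow_add, map_mul, ← mul_assoc, hx, map_mul,
    Nat.add_sub_cancel_left, mul_comm]

theorem exists_mem_denomSubmodule {c : PowerSeries k} (x : adjoinElemSubfield k p c) :
    ∃ N, x ∈ denomSubmodule p c N :=
  adjoinElemSubfield_le_locSubfield c x.2

theorem integralClosure_not_fg {c : PowerSeries k} (hc : c ∉ finiteCoeffSubring k p) :
    ¬ (Subalgebra.toSubmodule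
      (integralClosure (finiteCoeffSubring k p) (adjoinElemSubfield k p c))).FG := by
  intro hfg
  obtain ⟨N, hN⟩ := hfg.exists_le_of_monotone (denomSubmodule_mono c)
    fun x _ => exists_mem_denomSubmodule x
  -- `d = (c - trunc (N + 1) c) / X ^ (N + 1)` is integral, as `d ^ p ∈ A`,
  -- but `X ^ N * d ∉ A[c]`.
  set d : PowerSeries k := mk fun i => coeff (i + (N + 1)) c
  obtain ⟨b, hb, hdb⟩ :=
    hN (isIntegral_of_val_eq_coe ⟨d, coe_shift_mem_adjoinElemSubfield c _⟩ rfl)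
  rw [← map_mul] at hdb
  refine X_pow_mul_ne_add_X_pow_succ_mul hc N (mul_mem (pow_mem X_mem_finiteCoeffSubring N)
    (coe_polynomial_mem_finiteCoeffSubring (trunc (N + 1) c))) hb ?_
  conv_lhs => rw [PowerSeries.eq_X_pow_mul_shift_add_trunc (N + 1) c]
  rw [← HahnSeries.ofPowerSeries_injective hdb]
  ring

/-- If `[k : k^p] = ∞` then `A ≠ k⟦t⟧`, and for every
`c ∈ k⟦t⟧ \ A` the integral closure of `A` in the finite extension `L = K(c)` of its
fraction field `K` is not a finitely generated `A`-module (so `A` is not Japanese). -/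
theorem finiteCoeffSubring_ne_top_and_integralClosure_not_fg
    (hinf : ¬ FiniteDimensional ↥(pthPowerSubfield k p) k) :
    finiteCoeffSubring k p ≠ ⊤ ∧
    ∀ c : PowerSeries k, c ∉ finiteCoeffSubring k p →
      letI : Algebra ↥(finiteCoeffSubring k p) ↥(adjoinElemSubfield k p c) :=
        (toAdjoinElemSubfield k p c).toAlgebra
      ¬ (Subalgebra.toSubmodule
        (integralClosure ↥(finiteCoeffSubring k p) ↥(adjoinElemSubfield k p c))).FG :=
  ⟨finiteCoeffSubring_ne_top hinf, fun _ hc => integralClosure_not_fg hc⟩
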